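/- arXiv:2603.15781 — 8 statements merged into one kernel-verified Lean document; each statement's English description precedes it below -/
import Mathlib

section
/- A bag generation process M : X → Y → Δ(S) is reconstructible if and only if, for every x ∈ X, the family of vectors (M(x)(y))_{y ∈ Y} in ℝ^S is linearly independent. -/
/-- A probability vector on a finite type `T`. -/
def IsProbVec {T : Type*} [Fintype T] (Q : T → ℝ) : Prop :=
  (∀ t, 0 ≤ Q t) ∧ ∑ t, Q t = 1

/-- The argmax set of a real-valued function on labels. -/
def argmaxSet {Y : Type*} (Q : Y → ℝ) : Set Y := {y | ∀ y', Q y' ≤ Q y}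

/-!
If the vectors `M x y` are linearly independent, equal bag distributions force equal label
distributions. Conversely, a nontrivial relation `∑ g y • M x y = 0` has `∑ g = 0`, because every
`M x y` sums to one; normalising the positive and negative parts of `g` gives two probability
vectors with disjoint supports and the same bag distribution, and their argmax sets, being
nonempty and inside the respective supports, differ.
-/

open Finset

section ProbVec

variable {T : Type*} [Fintype T]

lemma isProbVec_div_sum {f : T → ℝ} (hf : ∀ t, 0 ≤ f t) (hsum : ∑ t, f t ≠ 0) :
    IsProbVec fun t => f t / ∑ t', f t' :=
  ⟨fun t => div_nonneg (hf t) (sum_nonneg fun t' _ => hf t'), by rw [← sum_div, div_self hsum]⟩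

lemma IsProbVec.pos_of_mem_argmaxSet {Q : T → ℝ} (hQ : IsProbVec Q) {t : T}
    (ht : t ∈ argmaxSet Q) : 0 < Q t := by
  by_contra! h
  have : ∑ t', Q t' ≤ 0 := sum_nonpos fun t' _ => (ht t').trans h
  linarith [hQ.2]

lemma IsProbVec.argmaxSet_nonempty {Q : T → ℝ} (hQ : IsProbVec Q) : (argmaxSet Q).Nonempty := by
  have hT : (univ : Finset T).Nonempty := nonempty_of_sum_ne_zero (hQ.2 ▸ one_ne_zero)
  obtain ⟨t, -, ht⟩ := exists_max_image univ Q hT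
  exact ⟨t, fun t' => ht t' (mem_univ t')⟩

lemma argmaxSet_ne_of_isProbVec_of_disjoint {P N : T → ℝ} (hP : IsProbVec P) (hN : IsProbVec N)
    (hPN : ∀ t, P t = 0 ∨ N t = 0) : argmaxSet P ≠ argmaxSet N := by
  intro h
  obtain ⟨t, ht⟩ := hP.argmaxSet_nonempty
  rcases hPN t with hPt | hNt
  · exact (hP.pos_of_mem_argmaxSet ht).ne' hPt
  · exact (hN.pos_of_mem_argmaxSet (h ▸ ht)).ne' hNt

lemma exists_isProbVec_sub_eq_smul {g : T → ℝ} (hg : g ≠ 0) (hsum : ∑ t, g t = 0) :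
    ∃ c : ℝ, ∃ P N : T → ℝ, IsProbVec P ∧ IsProbVec N ∧ (∀ t, P t = 0 ∨ N t = 0) ∧
      P - N = c • g := by
  set A := ∑ t, (g t)⁺
  have hneg : ∑ t, (g t)⁻ = A := by
    have : ∑ t, ((g t)⁺ - (g t)⁻) = 0 := by simpa only [posPart_sub_negPart] using hsum
    rwa [sum_sub_distrib, sub_eq_zero, eq_comm] at this
  have hA : A ≠ 0 := by
    intro hA
    have hpos := (sum_eq_zero_iff_of_nonneg fun t _ => posPart_nonneg (g t)).1 hA
    have hneg := (sum_eq_zero_iff_of_nonneg fun t _ => negPart_nonneg (g t)).1 (hneg.trans hA)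
    refine hg (funext fun t => ?_)
    rw [Pi.zero_apply, ← posPart_sub_negPart (g t), hpos t (mem_univ t), hneg t (mem_univ t),
      sub_zero]
  refine ⟨A⁻¹, fun t => (g t)⁺ / A, fun t => (g t)⁻ / A,
    isProbVec_div_sum (fun t => posPart_nonneg (g t)) hA,
    hneg ▸ isProbVec_div_sum (fun t => negPart_nonneg (g t)) (hneg ▸ hA), fun t => ?_, ?_⟩
  · rcases le_total (g t) 0 with h | h
    · exact .inl (by simp only [posPart_eq_zero.2 h, zero_div])
    · exact .inr (by simp only [negPart_eq_zero.2 h, zero_div])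
  · funext t
    rw [Pi.sub_apply, ← sub_div, posPart_sub_negPart, Pi.smul_apply, smul_eq_mul, div_eq_inv_mul]

end ProbVec

section Mixture

variable {Y S : Type*} [Fintype Y]

/-- Reconstructibility of a bag generation process at a single instance. -/
def ArgmaxReconstructible (v : Y → S → ℝ) : Prop :=
  ∀ Q1 Q2 : Y → ℝ, IsProbVec Q1 → IsProbVec Q2 →
    (∀ s, ∑ y, Q1 y * v y s = ∑ y, Q2 y * v y s) → argmaxSet Q1 = argmaxSet Q2

lemma forall_sum_mul_eq_iff_sum_sub_smul_eq_zero {v : Y → S → ℝ} {Q1 Q2 : Y → ℝ} :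
    (∀ s, ∑ y, Q1 y * v y s = ∑ y, Q2 y * v y s) ↔ ∑ y, (Q1 y - Q2 y) • v y = 0 := by
  simp only [funext_iff, Finset.sum_apply, Pi.smul_apply, smul_eq_mul, sub_mul, sum_sub_distrib,
    Pi.zero_apply, sub_eq_zero]

lemma sum_eq_zero_of_sum_smul_eq_zero [Fintype S] {v : Y → S → ℝ} (hv : ∀ y, ∑ s, v y s = 1)
    {g : Y → ℝ} (hg : ∑ y, g y • v y = 0) : ∑ y, g y = 0 :=
  calc ∑ y, g y = ∑ y, g y * ∑ s, v y s := by simp only [hv, mul_one]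
    _ = ∑ s, (∑ y, g y • v y) s := by
      simp only [mul_sum, Finset.sum_apply, Pi.smul_apply, smul_eq_mul]
      exact sum_comm
    _ = 0 := by simp only [hg, Pi.zero_apply, sum_const_zero]

lemma LinearIndependent.argmaxReconstructible {v : Y → S → ℝ} (hv : LinearIndependent ℝ v) :
    ArgmaxReconstructible v := by
  intro Q1 Q2 _ _ hmix
  have hQ := Fintype.linearIndependent_iff.1 hv _
    (forall_sum_mul_eq_iff_sum_sub_smul_eq_zero.1 hmix)
  rw [funext fun y => sub_eq_zero.1 (hQ y)]

lemma ArgmaxReconstructible.linearIndependent [Fintype S] {v : Y → S → ℝ}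
    (hv : ∀ y, ∑ s, v y s = 1) (h : ArgmaxReconstructible v) : LinearIndependent ℝ v := by
  rw [Fintype.linearIndependent_iff]
  by_contra! ⟨g, hg, y, hy⟩
  obtain ⟨c, P, N, hP, hN, hPN, hc⟩ := exists_isProbVec_sub_eq_smul
    (fun h => hy (congrFun h y)) (sum_eq_zero_of_sum_smul_eq_zero hv hg)
  refine argmaxSet_ne_of_isProbVec_of_disjoint hP hN hPN
    (h P N hP hN (forall_sum_mul_eq_iff_sum_sub_smul_eq_zero.2 ?_))
  calc ∑ y, (P y - N y) • v y = ∑ y, c • g y • v y := by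
        simp only [← Pi.sub_apply, hc, Pi.smul_apply, smul_eq_mul, mul_smul]
    _ = 0 := by rw [← smul_sum, hg, smul_zero]

end Mixture

theorem reconstructible_iff_linearIndependent_general
    {X Y : Type*} [Fintype Y]
    (M : X → Y → Finset Y → ℝ) (hM : ∀ x y, IsProbVec (M x y)) :
    (∀ x : X, ∀ Q1 Q2 : Y → ℝ, IsProbVec Q1 → IsProbVec Q2 →
        (∀ s : Finset Y, ∑ y, Q1 y * M x y s = ∑ y, Q2 y * M x y s) →
        argmaxSet Q1 = argmaxSet Q2)
    ↔ (∀ x : X, LinearIndependent ℝ (M x)) :=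
  forall_congr' fun x =>
    ⟨fun h => ArgmaxReconstructible.linearIndependent (fun y => (hM x y).2) h,
      LinearIndependent.argmaxReconstructible⟩

/-- A bag generation process `M : X → Y → Δ(S)` (with `S = Finset Y` the space of
bags of labels) is reconstructible if and only if, for every instance `x`, the family
of vectors `(M x y)_{y ∈ Y}` in `ℝ^S` is linearly independent. -/
theorem reconstructible_iff_linearIndependent
    {X Y : Type*} [Fintype Y] [DecidableEq Y] (hY : 2 ≤ Fintype.card Y)
    (M : X → Y → Finset Y → ℝ) (hM : ∀ x y, IsProbVec (M x y)) :
    (∀ x : X, ∀ Q1 Q2 : Y → ℝ, IsProbVec Q1 → IsProbVec Q2 →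
        (∀ s : Finset Y, ∑ y, Q1 y * M x y s = ∑ y, Q2 y * M x y s) →
        argmaxSet Q1 = argmaxSet Q2)
    ↔ (∀ x : X, LinearIndependent ℝ (M x)) :=
  reconstructible_iff_linearIndependent_general M hM
end

section
/- Let M : Y → (S → ℝ) satisfy Σ_{s ∈ S} M(y)(s) = 1 for every y ∈ Y (each column of the associated |S| × |Y| matrix sums to one). Suppose q : Y → ℝ is not identically zero and satisfies Σ_{y ∈ Y} q(y)·M(y)(s) = 0 for all s ∈ S. Then: (i) Σ_{y ∈ Y} q(y) = 0; (ii) writing q⁺(y) = max(q(y),0) and q⁻(y) = max(−q(y),0), the normalizations Q1 = q⁺ / Σ_y q⁺(y) and Q2 = q⁻ / Σ_y q⁻(y) are well-defined probability vectors on Y with Q1 ≠ Q2; (iii) Σ_y Q1(y)·M(y)(s) = Σ_y Q2(y)·M(y)(s) for all s ∈ S; and (iv) argmax Q1 and argmax Q2 are disjoint, so in particular argmax Q1 ≠ argmax Q2. -/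
/-- Normalized positive part of a vector `q : Y → ℝ`. -/
noncomputable def normPos {Y : Type*} [Fintype Y] (q : Y → ℝ) : Y → ℝ :=
  fun y => max (q y) 0 / ∑ y', max (q y') 0

theorem Fintype.exists_pos_of_sum_eq_zero {ι M : Type*} [Fintype ι] [AddCommMonoid M]
    [LinearOrder M] [IsOrderedAddMonoid M] {f : ι → M} (hsum : ∑ i, f i = 0) (hf : f ≠ 0) :
    ∃ i, 0 < f i := by
  by_contra! hnonpos
  exact hf ((Fintype.sum_eq_zero_iff_of_nonpos hnonpos).mp hsum)

theorem sum_eq_zero_of_forall_sum_mul_eq_zero {Y S : Type*} [Fintype Y] [Fintype S]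
    {M : Y → S → ℝ} (hM : ∀ y, ∑ s, M y s = 1) {q : Y → ℝ}
    (hker : ∀ s, ∑ y, q y * M y s = 0) : ∑ y, q y = 0 :=
  calc ∑ y, q y = ∑ y, ∑ s, q y * M y s := by simp only [← Finset.mul_sum, hM, mul_one]
    _ = 0 := by rw [Finset.sum_comm]; simp only [hker, Finset.sum_const_zero]

section normPos

variable {Y : Type*} [Fintype Y] {q : Y → ℝ}

theorem sum_max_zero_eq_sum_max_neg_zero (hsum : ∑ y, q y = 0) :
    ∑ y, max (q y) 0 = ∑ y, max (-q y) 0 := by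
  rw [← sub_eq_zero, ← Finset.sum_sub_distrib]
  simpa only [max_zero_sub_max_neg_zero_eq_self] using hsum

theorem sum_max_zero_pos (hpos : ∃ y, 0 < q y) : 0 < ∑ y, max (q y) 0 := by
  obtain ⟨y, hy⟩ := hpos
  exact Finset.sum_pos' (fun _ _ => le_max_right _ _)
    ⟨y, Finset.mem_univ y, lt_max_of_lt_left hy⟩

theorem isProbVec_normPos (hpos : ∃ y, 0 < q y) : IsProbVec (normPos q) := by
  have hA := sum_max_zero_pos hpos
  refine ⟨fun y => div_nonneg (le_max_right _ _) hA.le, ?_⟩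
  unfold normPos
  rw [← Finset.sum_div, div_self hA.ne']

theorem normPos_pos_iff (hpos : ∃ y, 0 < q y) {y : Y} : 0 < normPos q y ↔ 0 < q y := by
  unfold normPos
  rw [div_pos_iff_of_pos_right (sum_max_zero_pos hpos), lt_max_iff, lt_self_iff_false,
    or_false]

theorem pos_of_mem_argmaxSet_normPos (hpos : ∃ y, 0 < q y) {y : Y}
    (hy : y ∈ argmaxSet (normPos q)) : 0 < q y := by
  obtain ⟨y₀, hy₀⟩ := hpos
  have h₀ : 0 < normPos q y₀ := (normPos_pos_iff ⟨y₀, hy₀⟩).mpr hy₀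
  exact (normPos_pos_iff ⟨y₀, hy₀⟩).mp (h₀.trans_le (hy y₀))

theorem disjoint_argmaxSet_normPos_neg (hpos : ∃ y, 0 < q y) (hneg : ∃ y, 0 < -q y) :
    Disjoint (argmaxSet (normPos q)) (argmaxSet (normPos fun y => -q y)) :=
  Set.disjoint_left.mpr fun _ h₁ h₂ =>
    (neg_pos.mp (pos_of_mem_argmaxSet_normPos hneg h₂)).not_gt
      (pos_of_mem_argmaxSet_normPos hpos h₁)

theorem normPos_sub_normPos_neg (hsum : ∑ y, q y = 0) (y : Y) :
    normPos q y - normPos (fun y => -q y) y = q y / ∑ y', max (q y') 0 := by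
  unfold normPos
  rw [← sum_max_zero_eq_sum_max_neg_zero hsum, div_sub_div_same,
    max_zero_sub_max_neg_zero_eq_self]

theorem normPos_ne_normPos_neg (hsum : ∑ y, q y = 0) (hpos : ∃ y, 0 < q y) :
    normPos q ≠ normPos fun y => -q y := by
  obtain ⟨y, hy⟩ := hpos
  intro h
  have hdiff := normPos_sub_normPos_neg hsum y
  rw [h, sub_self, eq_comm, div_eq_zero_iff] at hdiff
  exact hdiff.elim hy.ne' (sum_max_zero_pos ⟨y, hy⟩).ne'

theorem sum_normPos_mul_eq_sum_normPos_neg_mul (hsum : ∑ y, q y = 0) {m : Y → ℝ}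
    (hker : ∑ y, q y * m y = 0) :
    ∑ y, normPos q y * m y = ∑ y, normPos (fun y' => -q y') y * m y := by
  rw [← sub_eq_zero, ← Finset.sum_sub_distrib]
  simp only [← sub_mul, normPos_sub_normPos_neg hsum, div_mul_eq_mul_div, ← Finset.sum_div,
    hker, zero_div]

end normPos

theorem argmaxSet_nonempty {Y : Type*} [Finite Y] [Nonempty Y] (Q : Y → ℝ) :
    (argmaxSet Q).Nonempty :=
  Finite.exists_max Q

theorem dependence_gives_indistinguishable_distributions_general
    {Y : Type*} [Fintype Y]
    (M : Y → Finset Y → ℝ) (hM : ∀ y, ∑ s : Finset Y, M y s = 1)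
    (q : Y → ℝ) (hq : q ≠ 0)
    (hker : ∀ s : Finset Y, ∑ y, q y * M y s = 0) :
    (∑ y, q y = 0) ∧
    (0 < ∑ y, max (q y) 0) ∧ (0 < ∑ y, max (-q y) 0) ∧
    IsProbVec (normPos q) ∧ IsProbVec (normPos (fun y => -q y)) ∧
    normPos q ≠ normPos (fun y => -q y) ∧
    (∀ s : Finset Y,
      ∑ y, normPos q y * M y s = ∑ y, normPos (fun y' => -q y') y * M y s) ∧
    Disjoint (argmaxSet (normPos q)) (argmaxSet (normPos (fun y => -q y))) ∧
    argmaxSet (normPos q) ≠ argmaxSet (normPos (fun y => -q y)) := by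
  have hsum := sum_eq_zero_of_forall_sum_mul_eq_zero hM hker
  have hpos := Fintype.exists_pos_of_sum_eq_zero hsum hq
  have hneg := Fintype.exists_pos_of_sum_eq_zero (f := fun y => -q y)
    (by rw [Finset.sum_neg_distrib, hsum, neg_zero]) (neg_ne_zero.mpr hq)
  have : Nonempty Y := ⟨hpos.choose⟩
  have hdisj := disjoint_argmaxSet_normPos_neg hpos hneg
  exact ⟨hsum, sum_max_zero_pos hpos, sum_max_zero_pos hneg,
    isProbVec_normPos hpos, isProbVec_normPos hneg, normPos_ne_normPos_neg hsum hpos,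
    fun s => sum_normPos_mul_eq_sum_normPos_neg_mul hsum (hker s),
    hdisj, hdisj.ne (argmaxSet_nonempty _).ne_empty⟩

/-- From a nonzero linear dependence `q` among the columns of a column-stochastic
bag generation matrix `M`, one gets: (i) `Σ q = 0`; (ii) the normalized
positive/negative parts `Q1, Q2` are well-defined, distinct probability vectors;
(iii) `Q1` and `Q2` induce the same bag distribution; (iv) their argmax sets are
disjoint, and in particular different. -/
theorem dependence_gives_indistinguishable_distributions
    {Y : Type*} [Fintype Y] [DecidableEq Y] (hY : 2 ≤ Fintype.card Y)
    (M : Y → Finset Y → ℝ) (hM : ∀ y, ∑ s : Finset Y, M y s = 1)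
    (q : Y → ℝ) (hq : q ≠ 0)
    (hker : ∀ s : Finset Y, ∑ y, q y * M y s = 0) :
    (∑ y, q y = 0) ∧
    (0 < ∑ y, max (q y) 0) ∧ (0 < ∑ y, max (-q y) 0) ∧
    IsProbVec (normPos q) ∧ IsProbVec (normPos (fun y => -q y)) ∧
    normPos q ≠ normPos (fun y => -q y) ∧
    (∀ s : Finset Y,
      ∑ y, normPos q y * M y s = ∑ y, normPos (fun y' => -q y') y * M y s) ∧
    Disjoint (argmaxSet (normPos q)) (argmaxSet (normPos (fun y => -q y))) ∧
    argmaxSet (normPos q) ≠ argmaxSet (normPos (fun y => -q y)) :=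
  dependence_gives_indistinguishable_distributions_general M hM q hq hker
end

section
/- (Pointwise form of the claim that the model of Cabannes et al. is label-aligned.) Let Q ∈ Δ(Y) with argmax Q = {i} a singleton, and let M : Y → Δ(S). Denote by P(s) = Σ_{y} Q(y)·M(y)(s) the induced bag distribution. Suppose the intersection of all bags with positive probability equals {i}, i.e., ⋂ {s ∈ S : P(s) > 0} = {i}. Then the bag frequencies F(y) = Σ_{s ∈ S, y ∈ s} P(s) satisfy F(i) = 1 and F(j) < 1 for all j ≠ i; hence argmax F = {i} = argmax Q. -/
/-- The bag frequency of label `y` under kernel `M` and label distribution `Q`. -/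
def bagFreq {Y : Type*} [Fintype Y] [DecidableEq Y]
    (M : Y → Finset Y → ℝ) (Q : Y → ℝ) (y : Y) : ℝ :=
  ∑ s ∈ Finset.univ.filter (fun s : Finset Y => y ∈ s), ∑ y', Q y' * M y' s

/-!
The bag frequency `F y` is the mass that the induced bag distribution `P` gives to the event
`y ∈ s`. Every bag of positive mass contains `i`, so this event has full mass for `y = i`;
for `j ≠ i` some bag of positive mass misses `j`, so the complementary event has positive mass
and `F j < 1 = F i`.
-/

namespace IsProbVec

variable {ι T : Type*} [Fintype ι] [Fintype T]

theorem mixture {Q : ι → ℝ} {M : ι → T → ℝ} (hQ : IsProbVec Q) (hM : ∀ k, IsProbVec (M k)) :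
    IsProbVec fun t => ∑ k, Q k * M k t := by
  refine ⟨fun t => Finset.sum_nonneg fun k _ => mul_nonneg (hQ.1 k) ((hM k).1 t), ?_⟩
  rw [Finset.sum_comm]
  simp_rw [← Finset.mul_sum, (hM _).2, mul_one]
  exact hQ.2

variable {P : T → ℝ} (hP : IsProbVec P) {p : T → Prop} [DecidablePred p]
include hP

theorem sum_filter_le_one : ∑ t ∈ Finset.univ.filter p, P t ≤ 1 :=
  hP.2 ▸ Finset.sum_le_sum_of_subset_of_nonneg (Finset.filter_subset _ _) fun t _ _ => hP.1 t

theorem sum_filter_eq_one (h : ∀ t, 0 < P t → p t) : ∑ t ∈ Finset.univ.filter p, P t = 1 :=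
  hP.2 ▸ Finset.sum_filter_of_ne fun t _ ht => h t ((hP.1 t).lt_of_ne' ht)

theorem sum_filter_lt_one {t : T} (ht : 0 < P t) (hpt : ¬ p t) :
    ∑ t ∈ Finset.univ.filter p, P t < 1 := by
  have hcompl : P t ≤ ∑ t ∈ Finset.univ.filter (fun t => ¬ p t), P t :=
    Finset.single_le_sum (fun t _ => hP.1 t) (by simpa using hpt)
  have hsplit := Finset.sum_filter_add_sum_filter_not Finset.univ p P
  rw [hP.2] at hsplit
  linarith

end IsProbVec

theorem argmaxSet_eq_singleton_of_lt {Y : Type*} {F : Y → ℝ} {i : Y}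
    (h : ∀ j, j ≠ i → F j < F i) : argmaxSet F = {i} := by
  ext y
  simp only [argmaxSet, Set.mem_ofPred_eq, Set.mem_singleton_iff]
  constructor
  · intro hy
    by_contra hne
    exact (h y hne).not_ge (hy i)
  · rintro rfl j
    rcases eq_or_ne j y with rfl | hj
    · exact le_rfl
    · exact (h j hj).le

theorem cabannes_labelAligned_pointwise_general
    {Y : Type*} [Fintype Y] [DecidableEq Y]
    (i : Y) (Q : Y → ℝ) (hQ : IsProbVec Q)
    (M : Y → Finset Y → ℝ) (hM : ∀ y, IsProbVec (M y))
    (hinter : {y : Y | ∀ s : Finset Y, 0 < ∑ y', Q y' * M y' s → y ∈ s} = {i}) :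
    bagFreq M Q i = 1 ∧
    (∀ j : Y, j ≠ i → bagFreq M Q j < 1) ∧
    argmaxSet (bagFreq M Q) = {i} := by
  have hP := hQ.mixture hM
  have hi : ∀ s : Finset Y, 0 < ∑ y', Q y' * M y' s → i ∈ s := by
    simpa using hinter.ge rfl
  have hFi : bagFreq M Q i = 1 := hP.sum_filter_eq_one hi
  have hFj : ∀ j, j ≠ i → bagFreq M Q j < 1 := by
    intro j hj
    have hj' : j ∉ {y : Y | ∀ s : Finset Y, 0 < ∑ y', Q y' * M y' s → y ∈ s} := by
      simpa [hinter] using hj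
    simp only [Set.mem_ofPred_eq, not_forall] at hj'
    obtain ⟨s, hs, hjs⟩ := hj'
    exact hP.sum_filter_lt_one hs hjs
  exact ⟨hFi, hFj, argmaxSet_eq_singleton_of_lt fun j hj => hFi ▸ hFj j hj⟩

/-- Pointwise form of the claim that the model of Cabannes et al. is label-aligned:
if `argmax Q = {i}` and the intersection of all bags with positive induced
probability equals `{i}`, then `F i = 1`, `F j < 1` for `j ≠ i`, and
`argmax F = {i} = argmax Q`. -/
theorem cabannes_labelAligned_pointwise
    {Y : Type*} [Fintype Y] [DecidableEq Y] (hY : 2 ≤ Fintype.card Y)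
    (i : Y) (Q : Y → ℝ) (hQ : IsProbVec Q) (hargmax : argmaxSet Q = {i})
    (M : Y → Finset Y → ℝ) (hM : ∀ y, IsProbVec (M y))
    (hinter : {y : Y | ∀ s : Finset Y, 0 < ∑ y', Q y' * M y' s → y ∈ s} = {i}) :
    bagFreq M Q i = 1 ∧
    (∀ j : Y, j ≠ i → bagFreq M Q j < 1) ∧
    argmaxSet (bagFreq M Q) = {i} :=
  cabannes_labelAligned_pointwise_general i Q hQ M hM hinter
end

section
/- (The uniform model of Feng et al. is label-aligned.) Let |Y| = c ≥ 2 and define M_unif : Y → (S → ℝ) by M_unif(y)(s) = 1/(2^{c−1} − 1) if y ∈ s and s ≠ Y, and M_unif(y)(s) = 0 otherwise. Then each M_unif(y) is a probability vector on S, and M_unif is label-aligned: for every Q ∈ Δ(Y), the argmax set of the bag frequencies F(y) = Σ_{s ∈ S, y ∈ s} Σ_{y'} Q(y')·M_unif(y')(s) equals argmax Q. -/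
/-- The uniform bag generation model of Feng et al.: given true label `y`, the bag is
uniform over the `2^{c-1} - 1` bags containing `y` other than `Y` itself. -/
noncomputable def Munif (Y : Type*) [Fintype Y] [DecidableEq Y] :
    Y → Finset Y → ℝ :=
  fun y s => if y ∈ s ∧ s ≠ Finset.univ
    then 1 / ((2 : ℝ) ^ (Fintype.card Y - 1) - 1) else 0

open Finset

lemma card_supersets {Y : Type*} [Fintype Y] [DecidableEq Y] (A : Finset Y) :
    (univ.filter (fun s : Finset Y => A ⊆ s)).card = 2 ^ (Fintype.card Y - A.card) := by
  rw [show Fintype.card Y - A.card = Aᶜ.card from (Finset.card_compl A).symm,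
    ← Finset.card_powerset]
  apply Finset.card_nbij' (fun s => s \ A) (fun s => s ∪ A)
  · intro s hs
    simp only [Finset.mem_coe, mem_filter, mem_univ, true_and] at hs
    simp [Finset.mem_powerset, Finset.subset_compl_comm]
  · intro s hs
    simp only [Finset.mem_coe, Finset.mem_powerset] at hs
    simp only [Finset.mem_coe, mem_filter, mem_univ, true_and]
    exact subset_union_right
  · intro s hs
    simp only [Finset.mem_coe, mem_filter, mem_univ, true_and] at hs
    exact Finset.sdiff_union_of_subset hs
  · intro s hs
    simp only [Finset.mem_coe, Finset.mem_powerset] at hs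
    exact Finset.union_sdiff_cancel_right (Finset.disjoint_left.2 fun x hx hxA => by
      have := hs hx; simp [Finset.mem_compl] at this; exact this hxA)

lemma card_supersets_ne_univ {Y : Type*} [Fintype Y] [DecidableEq Y] (A : Finset Y) :
    (univ.filter (fun s : Finset Y => A ⊆ s ∧ s ≠ univ)).card
      = 2 ^ (Fintype.card Y - A.card) - 1 := by
  have h : univ.filter (fun s : Finset Y => A ⊆ s ∧ s ≠ univ)
      = (univ.filter (fun s : Finset Y => A ⊆ s)).erase univ := by
    ext s; simp [Finset.mem_erase, and_comm]
  rw [h, Finset.card_erase_of_mem (by simp), card_supersets]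

/-- The uniform model of Feng et al. is label-aligned: each `Munif y` is a
probability vector, and for every label distribution `Q` the argmax set of the
bag frequencies equals `argmax Q`. -/
theorem feng_uniform_labelAligned
    {Y : Type*} [Fintype Y] [DecidableEq Y] (hY : 2 ≤ Fintype.card Y) :
    (∀ y : Y, IsProbVec (Munif Y y)) ∧
    (∀ Q : Y → ℝ, IsProbVec Q →
      argmaxSet (bagFreq (Munif Y) Q) = argmaxSet Q) := by
  set c := Fintype.card Y with hc
  set N : ℝ := (2 : ℝ) ^ (c - 1) - 1 with hNdef
  have hpow21 : (2 : ℝ) ^ (1 : ℕ) ≤ 2 ^ (c - 1) :=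
    pow_le_pow_right₀ one_le_two (by omega)
  have hN : 0 < N := by simp at hpow21; simp [hNdef]; nlinarith
  have hpow : (2 : ℝ) ^ (c - 1) = 2 * 2 ^ (c - 2) := by
    rw [show c - 1 = (c - 2) + 1 by omega, pow_succ]; ring
  have hpos2 : (0 : ℝ) < 2 ^ (c - 2) := by positivity
  set r : ℝ := ((2 : ℝ) ^ (c - 2) - 1) / N with hrdef
  have h1r : 0 < 1 - r := by
    rw [hrdef, sub_pos, div_lt_one hN, hNdef, hpow]; nlinarith
  -- cast of the key counts
  have hcast1 : ((2 ^ (c - 1) - 1 : ℕ) : ℝ) = N := by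
    rw [Nat.cast_sub Nat.one_le_two_pow]; push_cast; rw [hNdef]
  have hcast2 : ((2 ^ (c - 2) - 1 : ℕ) : ℝ) = (2 : ℝ) ^ (c - 2) - 1 := by
    rw [Nat.cast_sub Nat.one_le_two_pow]; push_cast; ring
  -- sum of Munif y over a filtered family
  have hsum_filter : ∀ (y' : Y) (F : Finset (Finset Y)),
      ∑ s ∈ F, Munif Y y' s
        = ((F.filter (fun s => y' ∈ s ∧ s ≠ univ)).card : ℝ) * (1 / N) := by
    intro y' F
    rw [show (∑ s ∈ F, Munif Y y' s)
        = ∑ s ∈ F, (if y' ∈ s ∧ s ≠ univ then 1 / N else 0) from rfl,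
      ← Finset.sum_filter, Finset.sum_const, nsmul_eq_mul]
  have hprob : ∀ y : Y, IsProbVec (Munif Y y) := by
    intro y
    constructor
    · intro s
      by_cases h : y ∈ s ∧ s ≠ univ
      · simp [Munif, h]
        have h2 : (2:ℝ) ^ (1:ℕ) ≤ 2 ^ (Fintype.card Y - 1) :=
          pow_le_pow_right₀ one_le_two (by omega)
        nlinarith
      · simp [Munif, h]
    · rw [hsum_filter y univ]
      have : (univ.filter (fun s : Finset Y => y ∈ s ∧ s ≠ univ)).card
          = 2 ^ (c - 1) - 1 := by
        have := card_supersets_ne_univ ({y} : Finset Y)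
        simpa [Finset.singleton_subset_iff] using this
      rw [this, hcast1]
      field_simp
  refine ⟨hprob, ?_⟩
  intro Q hQ
  -- row sums
  have hrow : ∀ y y' : Y,
      ∑ s ∈ univ.filter (fun s : Finset Y => y ∈ s), Munif Y y' s
        = if y' = y then 1 else r := by
    intro y y'
    rw [hsum_filter, Finset.filter_filter]
    by_cases h : y' = y
    · subst h
      have heq : (univ.filter (fun s : Finset Y => y' ∈ s ∧ y' ∈ s ∧ s ≠ univ))
          = univ.filter (fun s : Finset Y => ({y'} : Finset Y) ⊆ s ∧ s ≠ univ) := by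
        ext s; simp [Finset.singleton_subset_iff] <;> tauto
      rw [heq, card_supersets_ne_univ, Finset.card_singleton, ← hc, hcast1]
      field_simp
      simp
    · have hpair : ({y, y'} : Finset Y).card = 2 := Finset.card_pair (Ne.symm h)
      have : (univ.filter (fun s : Finset Y => y ∈ s ∧ y' ∈ s ∧ s ≠ univ)).card
          = 2 ^ (c - 2) - 1 := by
        have heq : (univ.filter (fun s : Finset Y => y ∈ s ∧ y' ∈ s ∧ s ≠ univ))
            = univ.filter (fun s : Finset Y => ({y, y'} : Finset Y) ⊆ s ∧ s ≠ univ) := by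
          ext s; simp [Finset.insert_subset_iff] <;> tauto
        rw [heq, card_supersets_ne_univ, hpair, ← hc]
      rw [this, hcast2, if_neg h, hrdef]
      ring
  -- bag frequency is affine in Q y
  have hbag : ∀ y : Y, bagFreq (Munif Y) Q y = Q y * (1 - r) + r := by
    intro y
    rw [bagFreq, Finset.sum_comm]
    have : ∀ y' : Y, ∑ s ∈ univ.filter (fun s : Finset Y => y ∈ s), Q y' * Munif Y y' s
        = Q y' * (if y' = y then 1 else r) := by
      intro y'
      rw [← Finset.mul_sum, hrow]
    rw [Finset.sum_congr rfl (fun y' _ => this y')]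
    have h2 : ∀ y' : Y, Q y' * (if y' = y then 1 else r)
        = Q y' * r + (if y' = y then Q y' * (1 - r) else 0) := by
      intro y'; by_cases h : y' = y <;> simp [h] <;> ring
    rw [Finset.sum_congr rfl (fun y' _ => h2 y'), Finset.sum_add_distrib,
      ← Finset.sum_mul, hQ.2, Finset.sum_ite_eq' univ y (fun y' => Q y' * (1 - r)),
      if_pos (Finset.mem_univ y)]
    ring
  ext y
  simp only [argmaxSet, Set.mem_setOf_eq]
  constructor
  · intro h y'
    have := h y'
    rw [hbag, hbag] at this
    nlinarith
  · intro h y'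
    have := h y'
    rw [hbag, hbag]
    nlinarith
end

section
/- Let |Y| = c ≥ 2 and let M_unif(y)(s) = 1/(2^{c−1} − 1) if y ∈ s and s ≠ Y, and 0 otherwise. Then for every Q ∈ Δ(Y) and all labels i, j ∈ Y, the bag frequencies F(y) = Σ_{s ∈ S, y ∈ s} Σ_{y'} Q(y')·M_unif(y')(s) satisfy the exact identity F(i) − F(j) = α·(Q(i) − Q(j)), where α = 2^{c−2}/(2^{c−1} − 1) > 0. -/
/-!
Under the uniform model, a bag drawn for label `y'` contains `y` with probability `1` if
`y' = y`, and otherwise with probability `β = (2^{c-2} - 1) / (2^{c-1} - 1)`: of the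
`2^{c-1} - 1` admissible bags containing `y'`, exactly `2^{c-2} - 1` also contain `y`.
Hence `F y = α Q y + β ∑ Q` with `α = 1 - β = 2^{c-2} / (2^{c-1} - 1)`, and the `β`-term
cancels in `F i - F j`.
-/

open Finset

theorem card_filter_superset {α : Type*} [Fintype α] [DecidableEq α] (t : Finset α) :
    #{s : Finset α | t ⊆ s} = 2 ^ (Fintype.card α - #t) := by
  rw [← card_compl, ← card_powerset]
  refine card_nbij' (·ᶜ) (·ᶜ) ?_ ?_ ?_ ?_ <;> intro s hs <;>
    simp_all [-coe_compl, subset_compl_comm]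

theorem card_filter_pair_subset_ne_univ {α : Type*} [Fintype α] [DecidableEq α] (a b : α) :
    (#{s : Finset α | a ∈ s ∧ b ∈ s ∧ s ≠ univ} : ℝ) =
      2 ^ (Fintype.card α - #{a, b}) - 1 := by
  have h : ({s : Finset α | a ∈ s ∧ b ∈ s ∧ s ≠ univ} : Finset _) =
      ({s | {a, b} ⊆ s} : Finset _).erase univ := by
    ext s
    simp only [mem_filter, mem_univ, true_and, mem_erase, insert_subset_iff,
      singleton_subset_iff]
    tauto
  rw [h, card_erase_of_mem (by simp), card_filter_superset, Nat.cast_sub Nat.one_le_two_pow]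
  push_cast
  rfl

theorem bagFreq_eq_sum_mul_sum {Y : Type*} [Fintype Y] [DecidableEq Y]
    (M : Y → Finset Y → ℝ) (Q : Y → ℝ) (y : Y) :
    bagFreq M Q y = ∑ y', Q y' * ∑ s with y ∈ s, M y' s := by
  simp only [bagFreq, mul_sum]
  exact sum_comm

theorem sum_filter_mem_munif {Y : Type*} [Fintype Y] [DecidableEq Y]
    (hY : 2 ≤ Fintype.card Y) (y y' : Y) :
    ∑ s with y ∈ s, Munif Y y' s =
      if y' = y then 1 else ((2 : ℝ) ^ (Fintype.card Y - 2) - 1) /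
        ((2 : ℝ) ^ (Fintype.card Y - 1) - 1) := by
  have hD : (2 : ℝ) ^ (Fintype.card Y - 1) - 1 ≠ 0 :=
    sub_ne_zero.2 (one_lt_pow₀ one_lt_two (by omega)).ne'
  unfold Munif
  rw [sum_ite, sum_const_zero, add_zero, sum_const, filter_filter, nsmul_eq_mul,
    card_filter_pair_subset_ne_univ, mul_one_div]
  split_ifs with h
  · subst h
    simp [hD]
  · rw [card_pair (Ne.symm h)]

theorem bagFreq_munif {Y : Type*} [Fintype Y] [DecidableEq Y]
    (hY : 2 ≤ Fintype.card Y) (Q : Y → ℝ) (y : Y) :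
    bagFreq (Munif Y) Q y =
      (2 : ℝ) ^ (Fintype.card Y - 2) / ((2 : ℝ) ^ (Fintype.card Y - 1) - 1) * Q y +
        ((2 : ℝ) ^ (Fintype.card Y - 2) - 1) / ((2 : ℝ) ^ (Fintype.card Y - 1) - 1) *
          ∑ y', Q y' := by
  have hD : (2 : ℝ) ^ (Fintype.card Y - 1) - 1 ≠ 0 :=
    sub_ne_zero.2 (one_lt_pow₀ one_lt_two (by omega)).ne'
  have hpow : (2 : ℝ) ^ (Fintype.card Y - 1) = 2 * 2 ^ (Fintype.card Y - 2) := by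
    rw [← pow_succ']
    congr 1
    omega
  simp only [bagFreq_eq_sum_mul_sum, sum_filter_mem_munif hY, mul_ite, mul_one]
  rw [← add_sum_erase _ _ (mem_univ y), ← add_sum_erase _ _ (mem_univ y), if_pos rfl,
    sum_congr rfl fun y' hy' => if_neg (ne_of_mem_erase hy'), ← sum_mul]
  field_simp
  rw [hpow]
  ring

theorem feng_uniform_frequency_identity_general
    {Y : Type*} [Fintype Y] [DecidableEq Y] (hY : 2 ≤ Fintype.card Y)
    (Q : Y → ℝ) (i j : Y) :
    bagFreq (Munif Y) Q i - bagFreq (Munif Y) Q j =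
      ((2 : ℝ) ^ (Fintype.card Y - 2) / ((2 : ℝ) ^ (Fintype.card Y - 1) - 1)) *
        (Q i - Q j) ∧
    0 < (2 : ℝ) ^ (Fintype.card Y - 2) / ((2 : ℝ) ^ (Fintype.card Y - 1) - 1) := by
  have hD : 0 < (2 : ℝ) ^ (Fintype.card Y - 1) - 1 :=
    sub_pos.2 (one_lt_pow₀ one_lt_two (by omega))
  refine ⟨?_, by positivity⟩
  rw [bagFreq_munif hY, bagFreq_munif hY]
  ring

/-- For the uniform model of Feng et al., the bag frequencies preserve differences
of label probabilities up to the positive scalar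
`α = 2^{c-2} / (2^{c-1} - 1)`:  `F i - F j = α (Q i - Q j)`. -/
theorem feng_uniform_frequency_identity
    {Y : Type*} [Fintype Y] [DecidableEq Y] (hY : 2 ≤ Fintype.card Y)
    (Q : Y → ℝ) (hQ : IsProbVec Q) (i j : Y) :
    bagFreq (Munif Y) Q i - bagFreq (Munif Y) Q j =
      ((2 : ℝ) ^ (Fintype.card Y - 2) / ((2 : ℝ) ^ (Fintype.card Y - 1) - 1)) *
        (Q i - Q j) ∧
    0 < (2 : ℝ) ^ (Fintype.card Y - 2) / ((2 : ℝ) ^ (Fintype.card Y - 1) - 1) :=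
  feng_uniform_frequency_identity_general hY Q i j
end

section
/- (Pointwise form of the claim that the deterministic model of Wen et al. is label-aligned.) Let |Y| = c ≥ 2, let i ∈ Y and let Q ∈ Δ(Y) be the point mass at i. Let q : Y × Y → ℝ satisfy q(y,y) = 1 for all y and 0 ≤ q(y,k) < 1 for all k ≠ y. Define M(y)(s) = (∏_{k ∈ s} q(y,k)) · (∏_{j ∉ s} (1 − q(y,j))). Then each M(y) is a probability vector on S, and the bag frequencies F(y) = Σ_{s ∈ S, y ∈ s} Σ_{y'} Q(y')·M(y')(s) satisfy F(i) = 1 and F(j) < 1 for every j ≠ i; hence argmax F = {i} = argmax Q. -/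
def Mwen {Y : Type*} [Fintype Y] [DecidableEq Y] (q : Y → Y → ℝ) :
    Y → Finset Y → ℝ :=
  fun y s => (∏ k ∈ s, q y k) * ∏ l ∈ sᶜ, (1 - q y l)

/-! Under the point mass at `i` the bag frequency of `j` is the marginal probability that `j`
is drawn into the bag of `i`. In the model of Wen et al. that marginal is `q(i,j)`: expanding
`∏ₖ (q(i,k) + (1 - q(i,k))) = 1` over subsets, and killing the `j`-th summand `1 - q(i,j)`,
leaves exactly the bags containing `j`. So `F = q(i,·)` peaks only at `i`. -/

open Finset

theorem argmaxSet_eq_singleton {Y : Type*} {f : Y → ℝ} {i : Y} (hf : ∀ j, j ≠ i → f j < f i) :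
    argmaxSet f = {i} := by
  ext y
  refine ⟨fun hy => ?_, fun hy j => ?_⟩
  · by_contra hyi
    exact (hf y hyi).not_ge (hy i)
  · rw [Set.mem_singleton_iff.mp hy]
    obtain rfl | hji := eq_or_ne j i
    exacts [le_rfl, (hf j hji).le]

theorem Fintype.sum_filter_mem_prod_mul_prod_compl {ι R : Type*} [Fintype ι] [DecidableEq ι]
    [CommSemiring R] (f g : ι → R) (j : ι) :
    ∑ s with j ∈ s, (∏ k ∈ s, f k) * ∏ k ∈ sᶜ, g k = f j * ∏ k ∈ univ.erase j, (f k + g k) := by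
  have hexpand := Fintype.prod_add f (Function.update g j 0)
  have hoff : ∏ k ∈ univ.erase j, (f k + Function.update g j 0 k) =
      ∏ k ∈ univ.erase j, (f k + g k) :=
    Finset.prod_congr rfl fun k hk => by rw [Function.update_of_ne (ne_of_mem_erase hk)]
  rw [← mul_prod_erase univ _ (mem_univ j), Function.update_self, add_zero, hoff] at hexpand
  rw [hexpand, sum_filter]
  refine Finset.sum_congr rfl fun s _ => ?_
  split_ifs with hjs
  · refine congrArg _ (Finset.prod_congr rfl fun k hk => ?_)
    rw [Function.update_of_ne (by rintro rfl; exact mem_compl.mp hk hjs)]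
  · rw [Finset.prod_eq_zero (mem_compl.mpr hjs) (Function.update_self ..), mul_zero]

section

variable {Y : Type*} [Fintype Y] [DecidableEq Y]

theorem bagFreq_pointMass (M : Y → Finset Y → ℝ) (i j : Y) :
    bagFreq M (fun y => if y = i then 1 else 0) j = ∑ s with j ∈ s, M i s := by
  simp only [bagFreq, ite_mul, one_mul, zero_mul, sum_ite_eq', mem_univ, if_true]

theorem Mwen_nonneg {q : Y → Y → ℝ} {y : Y} (hq0 : ∀ k, 0 ≤ q y k) (hq1 : ∀ k, q y k ≤ 1)
    (s : Finset Y) : 0 ≤ Mwen q y s :=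
  mul_nonneg (prod_nonneg fun k _ => hq0 k) (prod_nonneg fun k _ => sub_nonneg.mpr (hq1 k))

theorem sum_Mwen (q : Y → Y → ℝ) (y : Y) : ∑ s, Mwen q y s = 1 := by
  simpa [Mwen] using (Fintype.prod_add (q y) (fun k => 1 - q y k)).symm

theorem sum_filter_mem_Mwen (q : Y → Y → ℝ) (y j : Y) : ∑ s with j ∈ s, Mwen q y s = q y j := by
  simpa [Mwen] using Fintype.sum_filter_mem_prod_mul_prod_compl (q y) (fun k => 1 - q y k) j

theorem bagFreq_Mwen_pointMass (q : Y → Y → ℝ) (i j : Y) :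
    bagFreq (Mwen q) (fun y => if y = i then 1 else 0) j = q i j := by
  rw [bagFreq_pointMass, sum_filter_mem_Mwen]

end

theorem wen_labelAligned_pointwise_general
    {Y : Type*} [Fintype Y] [DecidableEq Y]
    (i : Y) (q : Y → Y → ℝ)
    (hdiag : ∀ y, q y y = 1)
    (hq0 : ∀ y k, 0 ≤ q y k)
    (hq1 : ∀ y k, k ≠ y → q y k < 1) :
    (∀ y : Y, IsProbVec (Mwen q y)) ∧
    bagFreq (Mwen q) (fun y => if y = i then 1 else 0) i = 1 ∧
    (∀ j : Y, j ≠ i →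
      bagFreq (Mwen q) (fun y => if y = i then 1 else 0) j < 1) ∧
    argmaxSet (bagFreq (Mwen q) (fun y => if y = i then 1 else 0)) = {i} ∧
    argmaxSet (fun y : Y => if y = i then (1 : ℝ) else 0) = {i} := by
  have hle : ∀ y k, q y k ≤ 1 := fun y k => by
    obtain rfl | hky := eq_or_ne k y
    exacts [(hdiag k).le, (hq1 y k hky).le]
  have hpeak : ∀ j, j ≠ i → bagFreq (Mwen q) (fun y => if y = i then 1 else 0) j < 1 :=
    fun j hj => by simpa only [bagFreq_Mwen_pointMass] using hq1 i j hj
  have hF_i : bagFreq (Mwen q) (fun y => if y = i then 1 else 0) i = 1 := by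
    rw [bagFreq_Mwen_pointMass, hdiag]
  refine ⟨fun y => ⟨Mwen_nonneg (hq0 y) (hle y), sum_Mwen q y⟩, hF_i, hpeak,
    argmaxSet_eq_singleton fun j hj => hF_i.symm ▸ hpeak j hj,
    argmaxSet_eq_singleton fun j hj => ?_⟩
  simp [hj]

/-- Pointwise form of the claim that the deterministic model of Wen et al. is
label-aligned: with `Q` the point mass at `i`, `q(y,y) = 1` and `0 ≤ q(y,k) < 1`
for `k ≠ y`, each `M(y)` is a probability vector, `F i = 1`, `F j < 1` for every
`j ≠ i`, and `argmax F = {i} = argmax Q`. -/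
theorem wen_labelAligned_pointwise
    {Y : Type*} [Fintype Y] [DecidableEq Y] (hY : 2 ≤ Fintype.card Y)
    (i : Y) (q : Y → Y → ℝ)
    (hdiag : ∀ y, q y y = 1)
    (hq0 : ∀ y k, 0 ≤ q y k)
    (hq1 : ∀ y k, k ≠ y → q y k < 1) :
    (∀ y : Y, IsProbVec (Mwen q y)) ∧
    bagFreq (Mwen q) (fun y => if y = i then 1 else 0) i = 1 ∧
    (∀ j : Y, j ≠ i →
      bagFreq (Mwen q) (fun y => if y = i then 1 else 0) j < 1) ∧
    argmaxSet (bagFreq (Mwen q) (fun y => if y = i then 1 else 0)) = {i} ∧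
    argmaxSet (fun y : Y => if y = i then (1 : ℝ) else 0) = {i} :=
  wen_labelAligned_pointwise_general i q hdiag hq0 hq1
end

section
/- (First half of the incomparability of the noisy model of Lv et al. with the label-aligned condition.) Let Y = {1,2,3}, let Q ∈ Δ(Y) be the point mass at label 1, and let M(1) ∈ Δ(S) assign M(1)({1}) = 1/10, M(1)({3}) = 4/10, M(1)({1,2}) = 5/10, and 0 to all other bags (M(2) and M(3) arbitrary probability vectors on S, irrelevant since Q(2) = Q(3) = 0). Then: (a) the bag frequencies are F(1) = 6/10, F(2) = 5/10, F(3) = 4/10, so argmax F = {1} = argmax Q (the scenario is label-aligned at this instance); yet (b) Σ_{s ∈ S, 1 ∈ s} M(1)(s)/|s| = 7/20 < 8/20 = Σ_{s ∈ S, 3 ∈ s} M(1)(s)/|s|, so the averaged-frequency condition Σ_{s ∋ i} M(i)(s)/|s| > Σ_{s ∋ j} M(i)(s)/|s| for all j ≠ i of the noisy model of Lv et al. fails for i = 1, j = 3. -/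
open Finset

theorem Finset.univ_finset_fin_three :
    (univ : Finset (Finset (Fin 3))) =
      {∅, {0}, {1}, {2}, {0, 1}, {0, 2}, {1, 2}, {0, 1, 2}} := by
  decide

theorem bagFreq_ite_eq {Y : Type*} [Fintype Y] [DecidableEq Y]
    (M : Y → Finset Y → ℝ) (a y : Y) :
    bagFreq M (fun y' => if y' = a then 1 else 0) y =
      ∑ s ∈ univ.filter (fun s : Finset Y => y ∈ s), M a s := by
  unfold bagFreq
  refine sum_congr rfl fun s _ => ?_
  simp [ite_mul]

theorem argmaxSet_eq_singleton_of_lt_s11 {Y : Type*} {f : Y → ℝ} {a : Y}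
    (h : ∀ y, y ≠ a → f y < f a) : argmaxSet f = {a} := by
  ext y
  refine ⟨fun hy => not_not.mp fun hya => (h y hya).not_ge (hy a), ?_⟩
  rintro rfl y'
  rcases eq_or_ne y' y with rfl | hy'
  · exact le_rfl
  · exact (h y' hy').le

/- Labels `1, 2, 3` of the paper are encoded as `0, 1, 2 : Fin 3`. -/

noncomputable def lvCounterexampleRow : Finset (Fin 3) → ℝ := fun s =>
  if s = {0} then 1/10 else if s = {2} then 4/10
  else if s = ({0, 1} : Finset (Fin 3)) then 5/10 else 0

theorem sum_filter_mem_lvCounterexampleRow (j : Fin 3) :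
    ∑ s ∈ univ.filter (fun s : Finset (Fin 3) => j ∈ s), lvCounterexampleRow s =
      ![6/10, 5/10, 4/10] j := by
  rw [sum_filter, univ_finset_fin_three]
  fin_cases j <;> norm_num +decide [lvCounterexampleRow]

theorem sum_filter_mem_lvCounterexampleRow_div_card (j : Fin 3) :
    ∑ s ∈ univ.filter (fun s : Finset (Fin 3) => j ∈ s), lvCounterexampleRow s / (s.card : ℝ) =
      ![7/20, 1/4, 8/20] j := by
  rw [sum_filter, univ_finset_fin_three]
  fin_cases j <;> norm_num +decide [lvCounterexampleRow]

theorem lv_noisy_incomparability_first_half_general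
    (M : Fin 3 → Finset (Fin 3) → ℝ)
    (hM0 : M 0 = fun s : Finset (Fin 3) =>
      if s = {0} then 1/10 else if s = {2} then 4/10
      else if s = ({0, 1} : Finset (Fin 3)) then 5/10 else 0) :
    bagFreq M (fun y => if y = 0 then 1 else 0) 0 = 6/10 ∧
    bagFreq M (fun y => if y = 0 then 1 else 0) 1 = 5/10 ∧
    bagFreq M (fun y => if y = 0 then 1 else 0) 2 = 4/10 ∧
    argmaxSet (bagFreq M (fun y => if y = 0 then 1 else 0)) = {0} ∧
    argmaxSet (fun y : Fin 3 => if y = 0 then (1 : ℝ) else 0) = {0} ∧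
    (∑ s ∈ Finset.univ.filter (fun s : Finset (Fin 3) => 0 ∈ s),
        M 0 s / (s.card : ℝ)) = 7/20 ∧
    (∑ s ∈ Finset.univ.filter (fun s : Finset (Fin 3) => 2 ∈ s),
        M 0 s / (s.card : ℝ)) = 8/20 ∧
    ¬ (∀ j : Fin 3, j ≠ 0 →
        (∑ s ∈ Finset.univ.filter (fun s : Finset (Fin 3) => j ∈ s),
          M 0 s / (s.card : ℝ)) <
        (∑ s ∈ Finset.univ.filter (fun s : Finset (Fin 3) => 0 ∈ s),
          M 0 s / (s.card : ℝ))) := by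
  have hF (y : Fin 3) :
      bagFreq M (fun y => if y = 0 then 1 else 0) y = ![6/10, 5/10, 4/10] y := by
    rw [bagFreq_ite_eq, hM0, ← sum_filter_mem_lvCounterexampleRow]
    rfl
  have hA (j : Fin 3) :
      ∑ s ∈ univ.filter (fun s : Finset (Fin 3) => j ∈ s), M 0 s / (s.card : ℝ) =
        ![7/20, 1/4, 8/20] j := by
    rw [hM0, ← sum_filter_mem_lvCounterexampleRow_div_card]
    rfl
  refine ⟨hF 0, hF 1, hF 2, argmaxSet_eq_singleton_of_lt_s11 ?_, argmaxSet_eq_singleton_of_lt_s11 ?_,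
    hA 0, hA 2, fun h => (h 2 (by decide)).not_ge ?_⟩
  · intro y hy
    fin_cases y
    · exact absurd rfl hy
    all_goals norm_num [hF, Matrix.cons_val]
  · intro y hy
    simp [hy]
  · norm_num [hA, Matrix.cons_val_two, Matrix.tail_cons]

/-- First half of the incomparability of the noisy model of Lv et al. with the
label-aligned condition: with `Q` the point mass at label `1` and
`M(1)({1}) = 1/10, M(1)({3}) = 4/10, M(1)({1,2}) = 5/10` (other bags `0`), the
bag frequencies are `F(1) = 6/10 > F(2) = 5/10 > F(3) = 4/10`, so
`argmax F = {1} = argmax Q` (label-aligned at this instance); yet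
`Σ_{s ∋ 1} M(1)(s)/|s| = 7/20 < 8/20 = Σ_{s ∋ 3} M(1)(s)/|s|`, so the
averaged-frequency condition of the noisy model of Lv et al. fails. -/
theorem lv_noisy_incomparability_first_half
    (M : Fin 3 → Finset (Fin 3) → ℝ) (hM : ∀ y, IsProbVec (M y))
    (hM0 : M 0 = fun s : Finset (Fin 3) =>
      if s = {0} then 1/10 else if s = {2} then 4/10
      else if s = ({0, 1} : Finset (Fin 3)) then 5/10 else 0) :
    bagFreq M (fun y => if y = 0 then 1 else 0) 0 = 6/10 ∧
    bagFreq M (fun y => if y = 0 then 1 else 0) 1 = 5/10 ∧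
    bagFreq M (fun y => if y = 0 then 1 else 0) 2 = 4/10 ∧
    argmaxSet (bagFreq M (fun y => if y = 0 then 1 else 0)) = {0} ∧
    argmaxSet (fun y : Fin 3 => if y = 0 then (1 : ℝ) else 0) = {0} ∧
    (∑ s ∈ Finset.univ.filter (fun s : Finset (Fin 3) => 0 ∈ s),
        M 0 s / (s.card : ℝ)) = 7/20 ∧
    (∑ s ∈ Finset.univ.filter (fun s : Finset (Fin 3) => 2 ∈ s),
        M 0 s / (s.card : ℝ)) = 8/20 ∧
    ¬ (∀ j : Fin 3, j ≠ 0 →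
        (∑ s ∈ Finset.univ.filter (fun s : Finset (Fin 3) => j ∈ s),
          M 0 s / (s.card : ℝ)) <
        (∑ s ∈ Finset.univ.filter (fun s : Finset (Fin 3) => 0 ∈ s),
          M 0 s / (s.card : ℝ))) :=
  lv_noisy_incomparability_first_half_general M hM0
end

section
/- (Label–kernel flip construction, the pointwise core of the minimality of the label-aligned condition.) Let Q1 ∈ Δ(Y) and M1 : Y → Δ(S). Suppose argmax Q1 = {y1} and the argmax set of the bag frequencies F1(y) = Σ_{s ∈ S, y ∈ s} Σ_{y'} Q1(y')·M1(y')(s) is {y2}, with y1 ≠ y2. Let σ : Y → Y be the transposition exchanging y1 and y2, and define Q2 = Q1 ∘ σ and M2(y) = M1(σ(y)). Then: (i) Σ_y Q2(y)·M2(y)(s) = Σ_y Q1(y)·M1(y)(s) for every s ∈ S (the two scenarios induce the same bag distribution); (ii) argmax Q2 = {y2}, and the bag frequencies F2 of (Q2, M2) equal F1, so argmax F2 = {y2} = argmax Q2 (the flipped scenario is label-aligned at this instance); and (iii) argmax Q1 ≠ argmax Q2. -/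
/-- Label–kernel flip construction, the pointwise core of the minimality of the
label-aligned condition. If `argmax Q1 = {y1}` and the argmax of the bag
frequencies of `(Q1, M1)` is `{y2}` with `y1 ≠ y2`, then flipping `y1` and `y2`
via the transposition `σ = swap y1 y2` (so `Q2 = Q1 ∘ σ`, `M2 y = M1 (σ y)`)
gives: (i) the same induced bag distribution; (ii) `argmax Q2 = {y2}`, the bag
frequencies of `(Q2, M2)` coincide with those of `(Q1, M1)`, and their argmax set
equals `argmax Q2` (the flipped scenario is label-aligned at this instance);
and (iii) `argmax Q1 ≠ argmax Q2`. -/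
theorem label_kernel_flip
    {Y : Type*} [Fintype Y] [DecidableEq Y] (hY : 2 ≤ Fintype.card Y)
    (Q1 : Y → ℝ) (hQ1 : IsProbVec Q1)
    (M1 : Y → Finset Y → ℝ) (hM1 : ∀ y, IsProbVec (M1 y))
    (y1 y2 : Y) (hne : y1 ≠ y2)
    (hQmax : argmaxSet Q1 = {y1})
    (hFmax : argmaxSet (bagFreq M1 Q1) = {y2}) :
    (∀ s : Finset Y,
      ∑ y, Q1 (Equiv.swap y1 y2 y) * M1 (Equiv.swap y1 y2 y) s =
      ∑ y, Q1 y * M1 y s) ∧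
    argmaxSet (fun y => Q1 (Equiv.swap y1 y2 y)) = {y2} ∧
    (∀ y : Y,
      bagFreq (fun y' => M1 (Equiv.swap y1 y2 y'))
        (fun y' => Q1 (Equiv.swap y1 y2 y')) y = bagFreq M1 Q1 y) ∧
    argmaxSet (bagFreq (fun y' => M1 (Equiv.swap y1 y2 y'))
        (fun y' => Q1 (Equiv.swap y1 y2 y'))) =
      argmaxSet (fun y => Q1 (Equiv.swap y1 y2 y)) ∧
    argmaxSet Q1 ≠ argmaxSet (fun y => Q1 (Equiv.swap y1 y2 y)) := by
  set σ := Equiv.swap y1 y2 with hσ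
  have key1 : ∀ s : Finset Y, ∑ y, Q1 (σ y) * M1 (σ y) s = ∑ y, Q1 y * M1 y s :=
    fun s => Equiv.sum_comp σ (fun y => Q1 y * M1 y s)
  have hswapmax : argmaxSet (fun y => Q1 (σ y)) = {y2} := by
    ext y
    constructor
    · intro h
      have hy : σ y ∈ argmaxSet Q1 := by
        intro y'
        simpa [hσ, Equiv.swap_apply_self] using h (σ y')
      rw [hQmax] at hy
      have hy1 : σ y = y1 := hy
      have : y = y2 := by
        apply σ.injective
        rw [hy1]; simp [hσ, Equiv.swap_apply_right]
      exact this
    · intro h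
      have hy : (y : Y) = y2 := h
      subst hy
      intro y'
      have h1 : Q1 (σ y') ≤ Q1 y1 := by
        have : y1 ∈ argmaxSet Q1 := by rw [hQmax]; rfl
        exact this (σ y')
      simpa [hσ, Equiv.swap_apply_right] using h1
  have key3 : ∀ y : Y,
      bagFreq (fun y' => M1 (σ y')) (fun y' => Q1 (σ y')) y = bagFreq M1 Q1 y := by
    intro y
    unfold bagFreq
    exact Finset.sum_congr rfl (fun s _ => key1 s)
  refine ⟨key1, hswapmax, key3, ?_, ?_⟩
  · have : bagFreq (fun y' => M1 (σ y')) (fun y' => Q1 (σ y')) = bagFreq M1 Q1 :=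
      funext key3
    rw [this, hFmax, hswapmax]
  · rw [hQmax, hswapmax]
    intro h
    exact hne (Set.singleton_eq_singleton_iff.mp h)
end
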